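/- For j ≥ 1 and p ≥ 1, let V_{j,p} ⊆ V^{⊗n} be the span of basis elements v_𝐢 with c_p(𝐢) ≥ j. If v_𝐢 ∈ V_{j,p} then T_p⁻¹ ⋯ T_{n−1}⁻¹ S_{n−1} ⋯ S_p (v_𝐢) ∈ v_𝐢 + V_{j+1, p}. -/

import Mathlib

/-!
Downward induction on `p`, using `X_p = T_p⁻¹ X_{p+1} S_p` for
`X_p = T_p⁻¹ ⋯ T_{n-1}⁻¹ S_{n-1} ⋯ S_p`. If `c_p(𝐢) ≥ j`, then `S_p v_𝐢 ∈ V_{j,p+1}`, on which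
`X_{p+1}` is the identity modulo `V_{j+1,p+1}`; and `T_p⁻¹` maps `V_{j+1,p+1}` into `V_{j+1,p}`
because colours are monotone in the index. It remains that `T_p⁻¹ S_p v_𝐢 ≡ v_𝐢` modulo
`V_{j+1,p}`: if `c_p(𝐢) = c_{p+1}(𝐢)` this is `T_p⁻¹ T_p = 1`; otherwise `S_p` is a signed swap,
which `T_p⁻¹` undoes up to a multiple of `v_{𝐢 s_p}`, whose `p`-th colour is strictly larger.
-/

namespace SSW

/-- Tuples indexing basis vectors of the `n`-fold tensor power of a space with
basis indexed by `Fin N`. -/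
abbrev Tup (N n : ℕ) := Fin n → Fin N

/-- The `n`-fold tensor power `V^{⊗ n}` of the superspace `V` with homogeneous basis
`v_1, …, v_N`, realised as the free `K`-module on the set of index tuples. -/
abbrev Ten (K : Type*) [Semiring K] (N n : ℕ) : Type _ := Tup N n →₀ K

/-- The basis vector `v_𝐢 = v_{i_1} ⊗ ⋯ ⊗ v_{i_n}`. -/
noncomputable def bv (K : Type*) [Semiring K] {N n : ℕ} (i : Tup N n) : Ten K N n :=
  Finsupp.single i 1

/-- The position (0-indexed) of the `a`-th tensor factor (1-indexed), clamped. -/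
def fpos (n : ℕ) (hn : 0 < n) (a : ℕ) : Fin n := ⟨min (a - 1) (n - 1), by omega⟩

/-- The `a`-th entry (1-indexed) `i_a` of a tuple `𝐢`. -/
def ent {N n : ℕ} (hn : 0 < n) (i : Tup N n) (a : ℕ) : Fin N := i (fpos n hn a)

/-- The tuple `𝐢 s_a`, with entries `i_a` and `i_{a+1}` interchanged. -/
def swapT {N n : ℕ} (hn : 0 < n) (a : ℕ) (i : Tup N n) : Tup N n :=
  i ∘ Equiv.swap (fpos n hn a) (fpos n hn (a + 1))

/-- `(-1)^x` for a parity `x ∈ ℤ/2`. -/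
def sgn (K : Type*) [Ring K] (x : ZMod 2) : K := if x = 1 then -1 else 1

/-- The parity function of `ℂ^{k|ℓ}`: `ī = 0` for `i ≤ k`, `ī = 1` for `i > k`. -/
def hookPar (k l : ℕ) : Fin (k + l) → ZMod 2 := fun i => if (i : ℕ) < k then 0 else 1

/-- The sign permutation operator `s_a` on `V^{⊗n}` (paper convention: `1 ≤ a ≤ n-1`). -/
noncomputable def sOp (K : Type*) [Field K] {N n : ℕ} (hn : 0 < n)
    (par : Fin N → ZMod 2) (a : ℕ) : Module.End K (Ten K N n) :=
  Finsupp.lift (Ten K N n) K (Tup N n) fun i =>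
    if ent hn i a = ent hn i (a + 1) then
      sgn K (par (ent hn i a)) • bv K i
    else
      sgn K (par (ent hn i a) * par (ent hn i (a + 1))) • bv K (swapT hn a i)

/-- The super Hecke operator `T_a` on `V^{⊗n}` (paper convention: `1 ≤ a ≤ n-1`). -/
noncomputable def TOp (K : Type*) [Field K] (q : K) {N n : ℕ} (hn : 0 < n)
    (par : Fin N → ZMod 2) (a : ℕ) : Module.End K (Ten K N n) :=
  Finsupp.lift (Ten K N n) K (Tup N n) fun i =>
    if ent hn i a < ent hn i (a + 1) then
      (q - q⁻¹) • bv K i +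
        sgn K (par (ent hn i a) * par (ent hn i (a + 1))) • bv K (swapT hn a i)
    else if ent hn i a = ent hn i (a + 1) then
      (((q - q⁻¹) + sgn K (par (ent hn i a)) * (q + q⁻¹)) / 2) • bv K i
    else
      sgn K (par (ent hn i a) * par (ent hn i (a + 1))) • bv K (swapT hn a i)

/-- The inverse `T_a⁻¹ = T_a - (q - q⁻¹)` of the Hecke operator `T_a`. -/
noncomputable def Tinv (K : Type*) [Field K] (q : K) {N n : ℕ} (hn : 0 < n)
    (par : Fin N → ZMod 2) (a : ℕ) : Module.End K (Ten K N n) :=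
  TOp K q hn par a - (q - q⁻¹) • 1

/-- The operator `S_a`: acts as `T_a` when the colors of the `a`-th and `(a+1)`-th
factors agree, and as the signed swap `s_a` otherwise. -/
noncomputable def SOp (K : Type*) [Field K] (q : K) {N n m : ℕ} (hn : 0 < n)
    (par : Fin N → ZMod 2) (col : Fin N → Fin m) (a : ℕ) : Module.End K (Ten K N n) :=
  Finsupp.lift (Ten K N n) K (Tup N n) fun i =>
    if col (ent hn i a) = col (ent hn i (a + 1)) then TOp K q hn par a (bv K i)
    else sOp K hn par a (bv K i)

/-- The inverse `S_a⁻¹` of `S_a`. -/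
noncomputable def Sinv (K : Type*) [Field K] (q : K) {N n m : ℕ} (hn : 0 < n)
    (par : Fin N → ZMod 2) (col : Fin N → Fin m) (a : ℕ) : Module.End K (Ten K N n) :=
  Finsupp.lift (Ten K N n) K (Tup N n) fun i =>
    if col (ent hn i a) = col (ent hn i (a + 1)) then Tinv K q hn par a (bv K i)
    else sOp K hn par a (bv K i)

/-- The operator `S_0 : v_𝐢 ↦ Q_{c_1(𝐢)} v_𝐢`. -/
noncomputable def S0op (K : Type*) [Field K] {N n m : ℕ} (hn : 0 < n)
    (col : Fin N → Fin m) (Q : Fin m → K) : Module.End K (Ten K N n) :=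
  Finsupp.lift (Ten K N n) K (Tup N n) fun i => Q (col (ent hn i 1)) • bv K i

/-- `θ = S_{n-1} ⋯ S_1`. -/
noncomputable def thetaOp (K : Type*) [Field K] (q : K) {N n m : ℕ} (hn : 0 < n)
    (par : Fin N → ZMod 2) (col : Fin N → Fin m) : Module.End K (Ten K N n) :=
  (((List.range (n - 1)).reverse).map fun t => SOp K q hn par col (t + 1)).prod

/-- `T_0 = T_1⁻¹ ⋯ T_{n-1}⁻¹ θ S_0`. -/
noncomputable def T0op (K : Type*) [Field K] (q : K) {N n m : ℕ} (hn : 0 < n)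
    (par : Fin N → ZMod 2) (col : Fin N → Fin m) (Q : Fin m → K) :
    Module.End K (Ten K N n) :=
  (((List.range (n - 1)).map fun t => Tinv K q hn par (t + 1)).prod) *
    thetaOp K q hn par col * S0op K hn col Q


/-- The subspace `V_{j,p}` of `V^{⊗n}`, spanned by the basis elements `v_𝐢`
with `c_p(𝐢) ≥ j` (colors are numbered `1, …, m`). -/
noncomputable def Vjp (K : Type*) [Field K] {N n m : ℕ} (hn : 0 < n)
    (col : Fin N → Fin m) (j p : ℕ) : Submodule K (Ten K N n) :=
  Submodule.span K {v | ∃ i : Tup N n, j ≤ (col (ent hn i p) : ℕ) + 1 ∧ v = bv K i}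

/-- `T_p⁻¹ ⋯ T_{n-1}⁻¹ S_{n-1} ⋯ S_p`. -/
noncomputable def tailOp (K : Type*) [Field K] (q : K) {N n m : ℕ} (hn : 0 < n)
    (par : Fin N → ZMod 2) (col : Fin N → Fin m) (p : ℕ) : Module.End K (Ten K N n) :=
  ((List.range (n - p)).map fun t => Tinv K q hn par (p + t)).prod *
    (((List.range (n - p)).reverse).map fun t => SOp K q hn par col (p + t)).prod

section Development

variable {K : Type*} [Field K] {N n m : ℕ} {hn : 0 < n}

theorem map_range_succ_add {α : Type*} (f : ℕ → α) (p d : ℕ) :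
    (List.range (d + 1)).map (fun t => f (p + t)) =
      f p :: (List.range d).map (fun t => f (p + 1 + t)) := by
  simp only [List.range_succ_eq_map, List.map_cons, List.map_map, Nat.add_zero]
  congr 2
  funext t
  rw [Function.comp_apply, Nat.add_right_comm]
  rfl

theorem lift_bv (f : Tup N n → Ten K N n) (i : Tup N n) :
    Finsupp.lift (Ten K N n) K (Tup N n) f (bv K i) = f i := by
  simp [bv]

@[simp]
theorem ent_swapT_left (a : ℕ) (i : Tup N n) : ent hn (swapT hn a i) a = ent hn i (a + 1) := by
  simp [ent, swapT]

@[simp]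
theorem ent_swapT_right (a : ℕ) (i : Tup N n) : ent hn (swapT hn a i) (a + 1) = ent hn i a := by
  simp [ent, swapT]

@[simp]
theorem swapT_swapT (a : ℕ) (i : Tup N n) : swapT hn a (swapT hn a i) = i := by
  funext x
  simp [swapT]

theorem sgn_mul_self (x : ZMod 2) : sgn K x * sgn K x = 1 := by
  unfold sgn
  split_ifs <;> norm_num

/-- The diagonal entry of `T_a` is `q` or `-q⁻¹`, the roots of `x² - (q - q⁻¹) x - 1`. -/
theorem hecke_eigenvalue_mul_sub [CharZero K] {q : K} (hq : q ≠ 0) (x : ZMod 2) :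
    ((q - q⁻¹) + sgn K x * (q + q⁻¹)) / 2 * (((q - q⁻¹) + sgn K x * (q + q⁻¹)) / 2 - (q - q⁻¹))
      = 1 := by
  unfold sgn
  split_ifs <;> field_simp <;> ring

section Operators

variable {q : K} (par : Fin N → ZMod 2) (col : Fin N → Fin m) (a : ℕ) (i : Tup N n)

theorem sOp_bv :
    sOp K hn par a (bv K i) =
      if ent hn i a = ent hn i (a + 1) then
        sgn K (par (ent hn i a)) • bv K i
      else
        sgn K (par (ent hn i a) * par (ent hn i (a + 1))) • bv K (swapT hn a i) :=
  lift_bv _ i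

theorem TOp_bv :
    TOp K q hn par a (bv K i) =
      if ent hn i a < ent hn i (a + 1) then
        (q - q⁻¹) • bv K i +
          sgn K (par (ent hn i a) * par (ent hn i (a + 1))) • bv K (swapT hn a i)
      else if ent hn i a = ent hn i (a + 1) then
        (((q - q⁻¹) + sgn K (par (ent hn i a)) * (q + q⁻¹)) / 2) • bv K i
      else
        sgn K (par (ent hn i a) * par (ent hn i (a + 1))) • bv K (swapT hn a i) :=
  lift_bv _ i

theorem Tinv_bv :
    Tinv K q hn par a (bv K i) =
      if ent hn i a < ent hn i (a + 1) then
        sgn K (par (ent hn i a) * par (ent hn i (a + 1))) • bv K (swapT hn a i)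
      else if ent hn i a = ent hn i (a + 1) then
        (((q - q⁻¹) + sgn K (par (ent hn i a)) * (q + q⁻¹)) / 2 - (q - q⁻¹)) • bv K i
      else
        sgn K (par (ent hn i a) * par (ent hn i (a + 1))) • bv K (swapT hn a i) -
          (q - q⁻¹) • bv K i := by
  rw [Tinv, LinearMap.sub_apply, TOp_bv]
  split_ifs <;> simp [sub_smul]

theorem SOp_bv :
    SOp K q hn par col a (bv K i) =
      if col (ent hn i a) = col (ent hn i (a + 1)) then TOp K q hn par a (bv K i)
      else sOp K hn par a (bv K i) :=
  lift_bv _ i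

theorem Tinv_mul_TOp [CharZero K] (hq : q ≠ 0) :
    Tinv K q hn par a * TOp K q hn par a = 1 := by
  refine Finsupp.basisSingleOne.ext fun i => ?_
  change Tinv K q hn par a (TOp K q hn par a (bv K i)) = bv K i
  set σ := sgn K (par (ent hn i a) * par (ent hn i (a + 1)))
  have hσ : σ * σ = 1 := sgn_mul_self _
  have hσ' : sgn K (par (ent hn i (a + 1)) * par (ent hn i a)) = σ := by rw [mul_comm]
  rcases lt_trichotomy (ent hn i a) (ent hn i (a + 1)) with h | h | h
  · simp only [TOp_bv, if_pos h, map_add, map_smul, Tinv_bv, ent_swapT_left, ent_swapT_right,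
      swapT_swapT, if_neg h.not_gt, if_neg h.ne', hσ']
    linear_combination (norm := module) hσ • bv K i
  · simp only [TOp_bv, Tinv_bv, if_neg h.not_lt, if_pos h, map_smul, smul_smul,
      hecke_eigenvalue_mul_sub hq, one_smul]
  · simp only [TOp_bv, if_neg h.not_gt, if_neg h.ne', map_smul, Tinv_bv, ent_swapT_left,
      ent_swapT_right, swapT_swapT, if_pos h, hσ']
    linear_combination (norm := module) hσ • bv K i

end Operators

section Filtration

variable {q : K} {par : Fin N → ZMod 2} {col : Fin N → Fin m}

theorem Vjp_eq_supported (j p : ℕ) :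
    Vjp K hn col j p = Finsupp.supported K K {i | j ≤ (col (ent hn i p) : ℕ) + 1} := by
  rw [Finsupp.supported_eq_span_single, Vjp]
  congr 1
  ext v
  simp [bv, eq_comm]

theorem bv_mem_Vjp_iff {j p : ℕ} {i : Tup N n} :
    bv K i ∈ Vjp K hn col j p ↔ j ≤ (col (ent hn i p) : ℕ) + 1 := by
  simp [Vjp_eq_supported, bv, Finsupp.mem_supported]

theorem map_mem_of_mem_Vjp {j p : ℕ} {W : Submodule K (Ten K N n)} (L : Module.End K (Ten K N n))
    (hL : ∀ i : Tup N n, j ≤ (col (ent hn i p) : ℕ) + 1 → L (bv K i) ∈ W)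
    {v : Ten K N n} (hv : v ∈ Vjp K hn col j p) : L v ∈ W :=
  (Submodule.span_le (p := W.comap L)).2 (by rintro _ ⟨i, hi, rfl⟩; exact hL i hi) hv

theorem Tinv_mem_Vjp (hcol : Monotone col) {j p : ℕ}
    {v : Ten K N n} (hv : v ∈ Vjp K hn col j (p + 1)) :
    Tinv K q hn par p v ∈ Vjp K hn col j p := by
  refine map_mem_of_mem_Vjp _ (fun i hi => ?_) hv
  have hswap : bv K (swapT hn p i) ∈ Vjp K hn col j p := by
    rwa [bv_mem_Vjp_iff, ent_swapT_left]
  rw [Tinv_bv]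
  split_ifs with hlt heq
  · exact Submodule.smul_mem _ _ hswap
  · exact Submodule.smul_mem _ _ (bv_mem_Vjp_iff.2 (heq ▸ hi))
  · have hcol_le : (col (ent hn i (p + 1)) : ℕ) ≤ col (ent hn i p) := hcol (not_lt.1 hlt)
    exact Submodule.sub_mem _ (Submodule.smul_mem _ _ hswap)
      (Submodule.smul_mem _ _ (bv_mem_Vjp_iff.2 (by omega)))

theorem SOp_bv_mem_Vjp {j p : ℕ} {i : Tup N n}
    (hi : j ≤ (col (ent hn i p) : ℕ) + 1) :
    SOp K q hn par col p (bv K i) ∈ Vjp K hn col j (p + 1) := by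
  have hswap : bv K (swapT hn p i) ∈ Vjp K hn col j (p + 1) := by
    rwa [bv_mem_Vjp_iff, ent_swapT_right]
  rw [SOp_bv]
  split_ifs with hc
  · have hself : bv K i ∈ Vjp K hn col j (p + 1) := bv_mem_Vjp_iff.2 (hc ▸ hi)
    rw [TOp_bv]
    split_ifs
    · exact Submodule.add_mem _ (Submodule.smul_mem _ _ hself) (Submodule.smul_mem _ _ hswap)
    · exact Submodule.smul_mem _ _ hself
    · exact Submodule.smul_mem _ _ hswap
  · rw [sOp_bv, if_neg (fun h => hc (congrArg col h))]
    exact Submodule.smul_mem _ _ hswap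

theorem Tinv_SOp_bv_sub_mem [CharZero K] (hq : q ≠ 0) (hcol : Monotone col) {j p : ℕ}
    {i : Tup N n} (hi : j ≤ (col (ent hn i p) : ℕ) + 1) :
    Tinv K q hn par p (SOp K q hn par col p (bv K i)) - bv K i ∈ Vjp K hn col (j + 1) p := by
  rw [SOp_bv]
  split_ifs with hc
  · rw [← Module.End.mul_apply, Tinv_mul_TOp par p hq, Module.End.one_apply, sub_self]
    exact Submodule.zero_mem _
  have hne : ent hn i p ≠ ent hn i (p + 1) := fun h => hc (congrArg col h)
  have hσ' : sgn K (par (ent hn i (p + 1)) * par (ent hn i p)) =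
      sgn K (par (ent hn i p) * par (ent hn i (p + 1))) := by rw [mul_comm]
  rw [sOp_bv, if_neg hne, map_smul, Tinv_bv, ent_swapT_left, ent_swapT_right, swapT_swapT, hσ']
  set σ := sgn K (par (ent hn i p) * par (ent hn i (p + 1)))
  have hσ : σ * σ = 1 := sgn_mul_self _
  rcases hne.lt_or_gt with h | h
  · have hcol_lt : (col (ent hn i p) : ℕ) < col (ent hn i (p + 1)) :=
      lt_of_le_of_ne (hcol h.le) (Fin.val_injective.ne hc)
    have hswap : bv K (swapT hn p i) ∈ Vjp K hn col (j + 1) p := by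
      rw [bv_mem_Vjp_iff, ent_swapT_left]
      omega
    rw [if_neg h.not_gt, if_neg h.ne', smul_sub, smul_smul, hσ, one_smul, smul_smul,
      sub_sub_cancel_left]
    exact Submodule.neg_mem _ (Submodule.smul_mem _ _ hswap)
  · rw [if_pos h, smul_smul, hσ, one_smul, sub_self]
    exact Submodule.zero_mem _

end Filtration

section Tail

variable {q : K} {par : Fin N → ZMod 2} {col : Fin N → Fin m}

theorem tailOp_of_le {p : ℕ} (hp : n ≤ p) : tailOp K q hn par col p = 1 := by
  simp [tailOp, Nat.sub_eq_zero_of_le hp]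

theorem tailOp_of_lt {p : ℕ} (hp : p < n) :
    tailOp K q hn par col p =
      Tinv K q hn par p * tailOp K q hn par col (p + 1) * SOp K q hn par col p := by
  obtain ⟨d, hd⟩ : ∃ d, n - p = d + 1 := ⟨n - p - 1, by omega⟩
  have hd' : n - (p + 1) = d := by omega
  simp only [tailOp, hd, hd', map_range_succ_add, List.map_reverse, List.reverse_cons,
    List.prod_cons, List.prod_append, List.prod_nil, mul_one, mul_assoc]

theorem tailOp_bv_sub_mem [CharZero K] (hq : q ≠ 0) (hcol : Monotone col) (p : ℕ) {j : ℕ}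
    {i : Tup N n} (hi : j ≤ (col (ent hn i p) : ℕ) + 1) :
    tailOp K q hn par col p (bv K i) - bv K i ∈ Vjp K hn col (j + 1) p := by
  rcases lt_or_ge p n with hp | hp
  · set u := SOp K q hn par col p (bv K i)
    have hu : u ∈ Vjp K hn col j (p + 1) := SOp_bv_mem_Vjp hi
    have htail : tailOp K q hn par col (p + 1) u - u ∈ Vjp K hn col (j + 1) (p + 1) :=
      map_mem_of_mem_Vjp (tailOp K q hn par col (p + 1) - 1)
        (fun k hk => tailOp_bv_sub_mem hq hcol (p + 1) hk) hu
    have hsplit : tailOp K q hn par col p (bv K i) - bv K i =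
        (Tinv K q hn par p u - bv K i) +
          Tinv K q hn par p (tailOp K q hn par col (p + 1) u - u) := by
      rw [tailOp_of_lt hp, map_sub, Module.End.mul_apply, Module.End.mul_apply]
      abel
    rw [hsplit]
    exact add_mem (Tinv_SOp_bv_sub_mem hq hcol hi) (Tinv_mem_Vjp hcol htail)
  · rw [tailOp_of_le hp, Module.End.one_apply, sub_self]
    exact zero_mem _
termination_by n - p

end Tail

end Development

theorem stmt8_general (K : Type*) [Field K] [CharZero K] (q : K) (hq : q ≠ 0)
    {N n m : ℕ} (hn : 0 < n) (par : Fin N → ZMod 2)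
    (col : Fin N → Fin m) (hcol : Monotone col)
    (j p : ℕ) (i : Tup N n)
    (hi : bv K i ∈ Vjp K hn col j p) :
    ((((List.range (n - p)).map fun t => Tinv K q hn par (p + t)).prod *
        (((List.range (n - p)).reverse).map fun t => SOp K q hn par col (p + t)).prod)
      (bv K i)) - bv K i ∈ Vjp K hn col (j + 1) p :=
  tailOp_bv_sub_mem hq hcol p (bv_mem_Vjp_iff.1 hi)

/-- if `v_𝐢 ∈ V_{j,p}` then
`T_p⁻¹ ⋯ T_{n−1}⁻¹ S_{n−1} ⋯ S_p (v_𝐢) ∈ v_𝐢 + V_{j+1,p}`. -/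
theorem stmt8 (K : Type*) [Field K] [CharZero K] (q : K) (hq : q ≠ 0)
    {N n m : ℕ} (hn : 0 < n) (par : Fin N → ZMod 2)
    (col : Fin N → Fin m) (hcol : Monotone col)
    (j p : ℕ) (hj : 1 ≤ j) (hp : 1 ≤ p) (hpn : p < n) (i : Tup N n)
    (hi : bv K i ∈ Vjp K hn col j p) :
    ((((List.range (n - p)).map fun t => Tinv K q hn par (p + t)).prod *
        (((List.range (n - p)).reverse).map fun t => SOp K q hn par col (p + t)).prod)
      (bv K i)) - bv K i ∈ Vjp K hn col (j + 1) p :=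
  stmt8_general K q hq hn par col hcol j p i hi

end SSW
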